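/- arXiv:2203.01032 — 3 statements merged into one kernel-verified Lean document; each statement's English description precedes it below -/
import Mathlib

section
/- Under the hypotheses of the previous setup, the unique morphism u : K → G_K with u' ∘ u = t_K also makes the square u' ∘ u = t_K ∘ 1_K a pullback. -/
open CategoryTheory Limits

/-- Given pullback squares `l' ∘ t_K = t_L ∘ l`, `t_L ∘ 1_L = α ∘ m` and
`l' ∘ u' = α ∘ g_L`, the unique morphism `u : K ⟶ G_K` with `u' ∘ u = t_K` and
`g_L ∘ u = m ∘ l` makes the square `u' ∘ u = t_K ∘ 1_K` a pullback. -/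
theorem u_square_isPullback
    {C : Type*} [Category C]
    {K L K' L' G_L G_K : C}
    (l : K ⟶ L) (tK : K ⟶ K') (tL : L ⟶ L') (l' : K' ⟶ L')
    (m : L ⟶ G_L) (α : G_L ⟶ L')
    (gL : G_K ⟶ G_L) (u' : G_K ⟶ K')
    (hrule : IsPullback l tK tL l')
    (hmatch : IsPullback m (𝟙 L) α tL)
    (hstep : IsPullback gL u' α l')
    (u : K ⟶ G_K)
    (hu : u ≫ u' = tK)
    (hu' : u ≫ gL = l ≫ m) :
    IsPullback u (𝟙 K) u' tK := by
  -- trivial square over l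
  have triv : IsPullback l (𝟙 K) (𝟙 L) l := IsPullback.of_vert_isIso ⟨by simp⟩
  -- big square: paste triv and hmatch horizontally
  have big : IsPullback (l ≫ m) (𝟙 K) α (l ≫ tL) := triv.paste_horiz hmatch
  have big' : IsPullback (u ≫ gL) (𝟙 K) α (tK ≫ l') := by
    rw [hu', ← hrule.w]; exact big
  exact IsPullback.of_right big' (by simp [hu]) hstep
end

section
/- Under the hypotheses of the PBPO+ rewrite step, if m : L → G_L is a monomorphism or t_K : K → K' is a monomorphism, then the induced morphism u : K → G_K is a monomorphism. -/
open CategoryTheory Limits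

/-- Under the hypotheses of the PBPO⁺ rewrite step, if `m` is a monomorphism or
`t_K` is a monomorphism, then the induced morphism `u : K ⟶ G_K` is a
monomorphism. -/
theorem u_mono_of_mono
    {C : Type*} [Category C]
    {K L K' L' G_L G_K : C}
    (l : K ⟶ L) (tK : K ⟶ K') (tL : L ⟶ L') (l' : K' ⟶ L')
    (m : L ⟶ G_L) (α : G_L ⟶ L')
    (gL : G_K ⟶ G_L) (u' : G_K ⟶ K')
    (hrule : IsPullback l tK tL l')
    (hmatch : IsPullback m (𝟙 L) α tL)
    (hstep : IsPullback gL u' α l')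
    (u : K ⟶ G_K)
    (hu : u ≫ u' = tK)
    (hu' : u ≫ gL = l ≫ m)
    (hmono : Mono m ∨ Mono tK) :
    Mono u := by
  rcases hmono with hm | htk
  · constructor
    intro Z a b h
    apply hrule.hom_ext
    · have : a ≫ l ≫ m = b ≫ l ≫ m := by
        rw [← hu', ← Category.assoc, ← Category.assoc, h]
      simpa [← Category.assoc, cancel_mono] using this
    · rw [← hu, ← Category.assoc, ← Category.assoc, h]
  · exact mono_of_mono_fac hu
end

section
/- In a quasitopos, if a regular monomorphism t_L : L ↪ L' admits a factorization η_L = s ∘ t_L through a monomorphism s : L' → T(L), then s equals the classifying morphism ⟨t_L, 1_L⟩ : L' → T(L) of the partial map (t_L, 1_L); conversely t_L is a restricted classifier if and only if ⟨t_L, 1_L⟩ is monic. -/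
open CategoryTheory Limits

/-- A regular-mono partial map classifier `(T, η)`: for every span
`A ⟵m X ⟶f B` with `m` a regular mono there is a unique `⟨m,f⟩ : A ⟶ T B`
making the square a pullback. -/
structure PartialMapClassifier (C : Type*) [Category C] where
  T : C → C
  η : ∀ X : C, X ⟶ T X
  η_regularMono : ∀ X : C, Nonempty (RegularMono (η X))
  classify : ∀ {X A B : C} (m : X ⟶ A) (_f : X ⟶ B), RegularMono m → (A ⟶ T B)
  classify_isPullback : ∀ {X A B : C} (m : X ⟶ A) (f : X ⟶ B) (hm : RegularMono m),
    IsPullback f m (η B) (classify m f hm)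
  classify_unique : ∀ {X A B : C} (m : X ⟶ A) (f : X ⟶ B) (hm : RegularMono m)
    (φ : A ⟶ T B), IsPullback f m (η B) φ → φ = classify m f hm

/-- A quasitopos: finite limits, finite colimits, locally cartesian closed
(every pullback functor has a right adjoint), and a regular-subobject
classifier. -/
class Quasitopos (C : Type*) [Category C] [HasFiniteLimits C] [HasFiniteColimits C] where
  pullback_isLeftAdjoint : ∀ {X Y : C} (f : X ⟶ Y), (Over.pullback f).IsLeftAdjoint
  Ω : C
  truth : ⊤_ C ⟶ Ω
  truth_regularMono : Nonempty (RegularMono truth)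
  χ : ∀ {X A : C} (m : X ⟶ A), RegularMono m → (A ⟶ Ω)
  χ_isPullback : ∀ {X A : C} (m : X ⟶ A) (hm : RegularMono m),
    IsPullback (terminal.from X) m truth (χ m hm)
  χ_unique : ∀ {X A : C} (m : X ⟶ A) (hm : RegularMono m) (c : A ⟶ Ω),
    IsPullback (terminal.from X) m truth c → c = χ m hm

/-- In a quasitopos with regular-mono partial map classifier `(T, η)`: if a
regular mono `t_L : L ⟶ L'` admits a factorization `η_L = s ∘ t_L` through a
mono `s`, then `s` equals the classifying morphism `⟨t_L, 1_L⟩`; and `t_L` is a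
restricted classifier iff `⟨t_L, 1_L⟩` is monic. -/
theorem restricted_classifier_iff
    {C : Type*} [Category C] [HasFiniteLimits C] [HasFiniteColimits C]
    [Quasitopos C] (P : PartialMapClassifier C)
    {L L' : C} (tL : L ⟶ L') (htL : RegularMono tL) :
    (∀ s : L' ⟶ P.T L, Mono s → tL ≫ s = P.η L → s = P.classify tL (𝟙 L) htL) ∧
      ((∃ s : L' ⟶ P.T L, Mono s ∧ tL ≫ s = P.η L) ↔
        Mono (P.classify tL (𝟙 L) htL)) := by
  have key : ∀ s : L' ⟶ P.T L, Mono s → tL ≫ s = P.η L →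
      s = P.classify tL (𝟙 L) htL := by
    intro s hs hc
    apply P.classify_unique
    have w : 𝟙 L ≫ P.η L = tL ≫ s := by simp [hc]
    refine IsPullback.of_isLimit' ⟨w⟩ ?_
    refine PullbackCone.IsLimit.mk _ (fun c => c.fst) (fun c => by simp) ?_ ?_
    · intro c
      have : (c.fst ≫ tL) ≫ s = c.snd ≫ s := by
        rw [Category.assoc, hc]; exact c.condition
      exact (cancel_mono s).mp this
    · intro c m h1 h2
      simpa using h1
  refine ⟨key, ⟨?_, ?_⟩⟩
  · rintro ⟨s, hs, hc⟩
    rw [← key s hs hc]; exact hs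
  · intro h
    exact ⟨P.classify tL (𝟙 L) htL, h, by
      simpa using (P.classify_isPullback tL (𝟙 L) htL).w.symm⟩
end
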